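/- The spider Sp(1^[5], 2^[1]) (five legs of length 1 and one leg of length 2) admits no local antimagic total labeling with exactly 2 distinct vertex weights; hence χ_lat(Sp(1^[5], 2)) = 3. -/

import Mathlib

open Finset

variable {V : Type*} [Fintype V] [DecidableEq V]

/-- The weight of a vertex `u` under the total labeling given by vertex labels `fv`
and edge labels `fe` : `w(u) = f(u) + \sum_{e incident to u} f(e)`. -/
def latWeight (G : SimpleGraph V) [DecidableRel G.Adj]
    (fv : V → ℕ) (fe : Sym2 V → ℕ) (u : V) : ℕ :=
  fv u + ∑ v ∈ G.neighborFinset u, fe s(u, v)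

/-- `fv, fe` together form a bijection from `V(G) ∪ E(G)` onto `{1, …, p + q}`,
where `p` is the order and `q` is the size of `G`. -/
def IsTotalLabeling (G : SimpleGraph V) [DecidableRel G.Adj]
    (fv : V → ℕ) (fe : Sym2 V → ℕ) : Prop :=
  Set.BijOn (Sum.elim fv (fun e : G.edgeSet => fe (e : Sym2 V))) Set.univ
    (Set.Icc 1 (Fintype.card V + G.edgeFinset.card))

/-- A local antimagic total labeling of `G` : a bijective total labeling such that any two
adjacent vertices get distinct weights. -/
def IsLocalAntimagicTotal (G : SimpleGraph V) [DecidableRel G.Adj]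
    (fv : V → ℕ) (fe : Sym2 V → ℕ) : Prop :=
  IsTotalLabeling G fv fe ∧
    ∀ ⦃u v : V⦄, G.Adj u v → latWeight G fv fe u ≠ latWeight G fv fe v

/-- The local antimagic total chromatic number `χ_lat(G)` : the minimum number of distinct
vertex weights taken over all local antimagic total labelings of `G`. -/
noncomputable def chiLat (G : SimpleGraph V) [DecidableRel G.Adj] : ℕ :=
  sInf {c | ∃ fv fe, IsLocalAntimagicTotal G fv fe ∧
    (Finset.univ.image (latWeight G fv fe)).card = c}

instance {W : Type*} (r : W → W → Prop) [DecidableEq W] [DecidableRel r] :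
    DecidableRel (SimpleGraph.fromRel r).Adj :=
  fun a b => decidable_of_iff _ (SimpleGraph.fromRel_adj r a b).symm

/-- Adjacency for the spider `Sp(1^[m], 2^[n])` : the center `x = none` is adjacent to each
leaf `y i = some (Sum.inl i)` and to each `u j = some (Sum.inr (j, false))`, and each `u j`
is adjacent to the leaf `v j = some (Sum.inr (j, true))`. -/
def spider12R (m n : ℕ) :
    Option (Fin m ⊕ Fin n × Bool) → Option (Fin m ⊕ Fin n × Bool) → Bool
  | none, some (Sum.inl _) => true
  | none, some (Sum.inr (_, false)) => true
  | some (Sum.inr (j, false)), some (Sum.inr (j', true)) => decide (j = j')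
  | _, _ => false

/-- The spider `Sp(1^[m], 2^[n])` with `m` legs of length `1` and `n` legs of length `2`. -/
abbrev spider12 (m n : ℕ) : SimpleGraph (Option (Fin m ⊕ Fin n × Bool)) :=
  SimpleGraph.fromRel (fun a b => spider12R m n a b = true)


/-! In a labeling with only two weights, the proper 2-colouring of the tree forces
`w(y_i) = w(u_1) = b` and `w(x) = w(v_1) = a`. Every label other than `f(x)` and `f(v_1)` then
lies in one of the six class-`b` stars, so `f(x) + f(v_1) + 6b = 1 + ⋯ + 15 = 120`. On the
other hand the eight labels at `x`, `u_1`, `x u_1` and the `x y_i` are distinct and positive,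
hence sum to at least `36`; since `a = f(x) + f(x u_1) + ∑ f(x y_i)` this gives
`f(u_1) ≥ 36 - a`, while `f(u_1 v_1) = a - f(v_1) ≥ a - 15`. So
`b = f(u_1) + f(x u_1) + f(u_1 v_1) ≥ 21`, contradicting `6b ≤ 120`. -/

theorem Finset.sum_range_card_le_sum_id (s : Finset ℕ) : ∑ i ∈ range #s, i ≤ ∑ i ∈ s, i := by
  induction s using Finset.induction_on_max with
  | empty => simp
  | insert a s hlt ih =>
    have ha : a ∉ s := fun h => lt_irrefl a (hlt a h)
    have hcard : #s ≤ a := by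
      simpa using card_le_card (fun x hx => mem_range.mpr (hlt x hx) : s ⊆ range a)
    rw [card_insert_of_notMem ha, sum_range_succ, sum_insert ha]
    omega

theorem Finset.sum_range_card_succ_le_sum_id {s : Finset ℕ} (hs : 0 ∉ s) :
    ∑ i ∈ range (#s + 1), i ≤ ∑ i ∈ s, i := by
  simpa [card_insert_of_notMem hs, sum_insert hs] using (insert 0 s).sum_range_card_le_sum_id

theorem Fintype.sum_range_card_succ_le_sum_of_injective {ι : Type*} [Fintype ι] {f : ι → ℕ}
    (hf : Function.Injective f) (hpos : ∀ i, 0 < f i) :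
    ∑ i ∈ range (Fintype.card ι + 1), i ≤ ∑ i, f i := by
  classical
  have hs : 0 ∉ univ.image f := by simpa using fun i => (hpos i).ne'
  simpa [card_image_of_injective _ hf, sum_image hf.injOn] using sum_range_card_succ_le_sum_id hs

theorem Fintype.apply_eq_apply_of_card_image_eq_two {α β : Type*} [Fintype α] [DecidableEq β]
    {f : α → β} (h : #(univ.image f) = 2) {x y z : α} (hxz : f x ≠ f z) (hyz : f y ≠ f z) :
    f x = f y := by
  obtain ⟨a, b, -, hab⟩ := card_eq_two.mp h
  have hval : ∀ w, f w = a ∨ f w = b := fun w => by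
    simpa [hab] using mem_image_of_mem f (mem_univ w)
  rcases hval x with hx | hx <;> rcases hval y with hy | hy <;> rcases hval z with hz | hz <;>
    simp_all

section Labeling

variable {W : Type*} [Fintype W] {G : SimpleGraph W} [DecidableRel G.Adj]
  {fv : W → ℕ} {fe : Sym2 W → ℕ}

abbrev totalLabel (G : SimpleGraph W) (fv : W → ℕ) (fe : Sym2 W → ℕ) : W ⊕ G.edgeSet → ℕ :=
  Sum.elim fv fun e => fe e

namespace IsTotalLabeling

theorem of_injective (hinj : Function.Injective (totalLabel G fv fe))
    (hmaps : ∀ p, totalLabel G fv fe p ∈ Set.Icc 1 (Fintype.card W + #G.edgeFinset)) :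
    IsTotalLabeling G fv fe := by
  refine ⟨fun p _ => hmaps p, hinj.injOn, fun k hk => ?_⟩
  have himage : univ.image (totalLabel G fv fe) = Icc 1 (Fintype.card W + #G.edgeFinset) := by
    refine eq_of_subset_of_card_le (fun k hk => ?_) ?_
    · obtain ⟨p, -, rfl⟩ := mem_image.mp hk
      exact Finset.mem_Icc.mpr (hmaps p)
    · simp [card_image_of_injective _ hinj, SimpleGraph.edgeFinset_card]
  obtain ⟨p, -, hp⟩ := mem_image.mp (himage ▸ Finset.mem_Icc.mpr hk)
  exact ⟨p, Set.mem_univ p, hp⟩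

theorem injective (h : IsTotalLabeling G fv fe) : Function.Injective (totalLabel G fv fe) :=
  Set.injOn_univ.mp h.injOn

theorem mem_Icc (h : IsTotalLabeling G fv fe) (p : W ⊕ G.edgeSet) :
    totalLabel G fv fe p ∈ Set.Icc 1 (Fintype.card W + #G.edgeFinset) :=
  h.mapsTo (Set.mem_univ p)

theorem sum_eq (h : IsTotalLabeling G fv fe) :
    ∑ p, totalLabel G fv fe p = ∑ k ∈ Icc 1 (Fintype.card W + #G.edgeFinset), k :=
  sum_nbij _ (fun p _ => Finset.mem_Icc.mpr (h.mem_Icc p)) (by simpa using h.injOn)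
    (by simpa using h.surjOn) (fun _ _ => rfl)

end IsTotalLabeling

namespace IsLocalAntimagicTotal

theorem two_le_card_image_latWeight (h : IsLocalAntimagicTotal G fv fe) {u v : W}
    (huv : G.Adj u v) : 2 ≤ #(univ.image (latWeight G fv fe)) :=
  one_lt_card.mpr ⟨_, mem_image_of_mem _ (mem_univ u), _, mem_image_of_mem _ (mem_univ v), h.2 huv⟩

theorem latWeight_eq_of_adj_of_adj (h : IsLocalAntimagicTotal G fv fe)
    (hcard : #(univ.image (latWeight G fv fe)) = 2) {u v w : W} (hu : G.Adj u w)
    (hv : G.Adj v w) : latWeight G fv fe u = latWeight G fv fe v :=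
  Fintype.apply_eq_apply_of_card_image_eq_two hcard (h.2 hu) (h.2 hv)

end IsLocalAntimagicTotal

end Labeling

namespace SpiderFiveOne

abbrev Vertex : Type := Option (Fin 5 ⊕ Fin 1 × Bool)

-- `hub`, `leaf i`, `mid`, `tip` are the vertices `x`, `y_i`, `u_1`, `v_1`.
def hub : Vertex := none

def leaf (i : Fin 5) : Vertex := some (.inl i)

def mid : Vertex := some (.inr (0, false))

def tip : Vertex := some (.inr (0, true))

theorem adj_leaf_hub (i : Fin 5) : (spider12 5 1).Adj (leaf i) hub := by
  revert i; decide

theorem adj_mid_hub : (spider12 5 1).Adj mid hub := by decide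

theorem adj_tip_mid : (spider12 5 1).Adj tip mid := by decide

section Weights

variable (fv : Vertex → ℕ) (fe : Sym2 Vertex → ℕ)

theorem latWeight_leaf (i : Fin 5) :
    latWeight (spider12 5 1) fv fe (leaf i) = fv (leaf i) + fe s(hub, leaf i) := by
  rw [latWeight, show (spider12 5 1).neighborFinset (leaf i) = {hub} by revert i; decide,
    sum_singleton, Sym2.eq_swap]

theorem latWeight_mid :
    latWeight (spider12 5 1) fv fe mid = fv mid + fe s(hub, mid) + fe s(mid, tip) := by
  rw [latWeight, show (spider12 5 1).neighborFinset mid = {hub, tip} by decide,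
    sum_pair (by decide), Sym2.eq_swap, add_assoc]

theorem latWeight_tip : latWeight (spider12 5 1) fv fe tip = fv tip + fe s(mid, tip) := by
  rw [latWeight, show (spider12 5 1).neighborFinset tip = {mid} by decide, sum_singleton,
    Sym2.eq_swap]

theorem latWeight_hub :
    latWeight (spider12 5 1) fv fe hub = fv hub + ∑ i, fe s(hub, leaf i) + fe s(hub, mid) := by
  rw [latWeight, show (spider12 5 1).neighborFinset hub = insert mid (univ.image leaf) by decide,
    sum_insert (by decide), sum_image (fun i _ j _ h => by simpa [leaf] using h)]
  ring

end Weights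

def edge {a b : Vertex} (h : (spider12 5 1).Adj a b) : (spider12 5 1).edgeSet := ⟨s(a, b), h⟩

-- Instance search finds this only with a raised `synthInstance.maxSize`.
instance : DecidableEq (Vertex ⊕ (spider12 5 1).edgeSet) := instDecidableEqSum

def part : Fin 15 → Vertex ⊕ (spider12 5 1).edgeSet :=
  ![.inl hub, .inl mid, .inr (edge adj_mid_hub.symm),
    .inr (edge (adj_leaf_hub 0).symm), .inr (edge (adj_leaf_hub 1).symm),
    .inr (edge (adj_leaf_hub 2).symm), .inr (edge (adj_leaf_hub 3).symm),
    .inr (edge (adj_leaf_hub 4).symm),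
    .inl tip, .inr (edge adj_tip_mid.symm),
    .inl (leaf 0), .inl (leaf 1), .inl (leaf 2), .inl (leaf 3), .inl (leaf 4)]

theorem part_bijective : Function.Bijective part :=
  (Fintype.bijective_iff_injective_and_card _).mpr ⟨by decide, by decide⟩

theorem exists_latWeight_leaf_ne_mid {fv : Vertex → ℕ} {fe : Sym2 Vertex → ℕ}
    (h : IsTotalLabeling (spider12 5 1) fv fe)
    (htip : latWeight (spider12 5 1) fv fe tip = latWeight (spider12 5 1) fv fe hub) :
    ∃ i, latWeight (spider12 5 1) fv fe (leaf i) ≠ latWeight (spider12 5 1) fv fe mid := by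
  by_contra! hleaf
  have htotal : ∑ i, totalLabel _ fv fe (part i) = 120 := by
    rw [part_bijective.sum_comp, h.sum_eq]
    decide
  have hhub_side : 36 ≤ ∑ i : Fin 8, totalLabel _ fv fe (part (Fin.castLE (by norm_num) i)) :=
    le_trans (by decide) <| Fintype.sum_range_card_succ_le_sum_of_injective
      (h.injective.comp (part_bijective.1.comp (Fin.castLE_injective _)))
      (fun i => (h.mem_Icc _).1)
  have htip_le : fv tip ≤ 15 := (h.mem_Icc (.inl tip)).2
  have hleaves : ∑ i, (fv (leaf i) + fe s(hub, leaf i)) =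
      5 * latWeight (spider12 5 1) fv fe mid := by
    simp [← latWeight_leaf, hleaf]
  have hmid := latWeight_mid fv fe
  rw [latWeight_tip, latWeight_hub] at htip
  simp only [totalLabel, part, edge, Fin.sum_univ_succ, Fin.sum_univ_zero, Fin.castLE_zero,
    Fin.castLE_succ, Matrix.cons_val_zero, Matrix.cons_val_succ, Sum.elim_inl, Sum.elim_inr,
    add_zero] at htotal hhub_side
  simp only [Fin.sum_univ_five] at htip hleaves
  have hcount : fv hub + fv tip + 6 * latWeight (spider12 5 1) fv fe mid = 120 := by omega
  have hmid_ge : 21 ≤ latWeight (spider12 5 1) fv fe mid := by omega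
  omega

theorem card_image_latWeight_ne_two {fv : Vertex → ℕ} {fe : Sym2 Vertex → ℕ}
    (h : IsLocalAntimagicTotal (spider12 5 1) fv fe) :
    #(univ.image (latWeight (spider12 5 1) fv fe)) ≠ 2 := by
  intro hcard
  obtain ⟨i, hi⟩ := exists_latWeight_leaf_ne_mid h.1
    (h.latWeight_eq_of_adj_of_adj hcard adj_tip_mid adj_mid_hub.symm)
  exact hi (h.latWeight_eq_of_adj_of_adj hcard (adj_leaf_hub i) adj_mid_hub)

/- The weights are `17` at the leaves `y_i` and at `v_1`, `32` at `u_1` and `45` at `x`.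
Each edge carries the potential of its endpoint farther from the hub. -/
def witnessVertexLabel : Vertex → ℕ
  | none => 1
  | some (.inl i) => 13 - i
  | some (.inr (_, false)) => 3
  | some (.inr (_, true)) => 2

def witnessEdgePotential : Vertex → ℕ
  | none => 0
  | some (.inl i) => i + 4
  | some (.inr (_, false)) => 14
  | some (.inr (_, true)) => 15

def witnessEdgeLabel (e : Sym2 Vertex) : ℕ := (e.map witnessEdgePotential).sup

theorem witness_isLocalAntimagicTotal :
    IsLocalAntimagicTotal (spider12 5 1) witnessVertexLabel witnessEdgeLabel :=
  ⟨.of_injective (by decide) (by decide), by decide⟩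

theorem card_image_latWeight_witness :
    #(univ.image (latWeight (spider12 5 1) witnessVertexLabel witnessEdgeLabel)) = 3 := by
  decide

end SpiderFiveOne

theorem chiLat_spider12_five_one :
    (∀ fv fe, IsLocalAntimagicTotal (spider12 5 1) fv fe →
      (Finset.univ.image (latWeight (spider12 5 1) fv fe)).card ≠ 2) ∧
    chiLat (spider12 5 1) = 3 := by
  refine ⟨fun _ _ => SpiderFiveOne.card_image_latWeight_ne_two, ?_⟩
  have h3 : 3 ∈ {c | ∃ fv fe, IsLocalAntimagicTotal (spider12 5 1) fv fe ∧
      (Finset.univ.image (latWeight (spider12 5 1) fv fe)).card = c} :=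
    ⟨_, _, SpiderFiveOne.witness_isLocalAntimagicTotal, SpiderFiveOne.card_image_latWeight_witness⟩
  refine le_antisymm (Nat.sInf_le h3) (le_csInf ⟨3, h3⟩ ?_)
  rintro c ⟨fv, fe, h, rfl⟩
  have h_two_le := h.two_le_card_image_latWeight SpiderFiveOne.adj_mid_hub
  have h_ne_two := SpiderFiveOne.card_image_latWeight_ne_two h
  omega
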